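/- arXiv:2410.18900 — 6 statements merged into one kernel-verified Lean document; each statement's English description precedes it below -/
import Mathlib

section
/- Let S be a type, let d : S → S → ℝ be symmetric with d(x,x) = 0 for all x and d(x,y) > 0 for all x ≠ y, and let s > 0. Then for finite subsets T₁, T₂ of S, equality E_s(T₁) + E_s(T₂) = E_s(T₁ ∪ T₂) + E_s(T₁ ∩ T₂) holds if and only if T₁ ⊆ T₂ or T₂ ⊆ T₁. -/
/-- The Riesz s-energy of a finite subset `X` with respect to a
dissimilarity function `d`: the sum over ordered pairs `(x, y) ∈ X × X`
with `x ≠ y` and `d x y ≠ 0` of `d x y ^ (-s)`. -/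
noncomputable def rieszEnergy {S : Type*} [DecidableEq S]
    (s : ℝ) (d : S → S → ℝ) (X : Finset S) : ℝ :=
  ∑ p ∈ X.offDiag.filter (fun p => d p.1 p.2 ≠ 0), (d p.1 p.2) ^ (-s)

theorem rieszEnergy_supermodular_eq_iff {S : Type*} [DecidableEq S]
    (d : S → S → ℝ) (hsymm : ∀ x y, d x y = d y x)
    (hdiag : ∀ x, d x x = 0) (hpos : ∀ x y, x ≠ y → 0 < d x y)
    (s : ℝ) (hs : 0 < s) (T₁ T₂ : Finset S) :
    rieszEnergy s d T₁ + rieszEnergy s d T₂ =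
      rieszEnergy s d (T₁ ∪ T₂) + rieszEnergy s d (T₁ ∩ T₂) ↔
    T₁ ⊆ T₂ ∨ T₂ ⊆ T₁ := by
  have hE : ∀ T : Finset S, rieszEnergy s d T = ∑ p ∈ T.offDiag, d p.1 p.2 ^ (-s) := by
    intro T
    unfold rieszEnergy
    rw [Finset.filter_true_of_mem]
    intro p hp
    exact (hpos _ _ (Finset.mem_offDiag.mp hp).2.2).ne'
  simp only [hE]
  have hsub : T₁.offDiag ∪ T₂.offDiag ⊆ (T₁ ∪ T₂).offDiag := by
    intro p hp
    simp only [Finset.mem_union, Finset.mem_offDiag] at hp ⊢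
    tauto
  have hinter : T₁.offDiag ∩ T₂.offDiag = (T₁ ∩ T₂).offDiag := by
    ext p
    simp only [Finset.mem_inter, Finset.mem_offDiag]
    tauto
  set D : Finset (S × S) := (T₁ ∪ T₂).offDiag \ (T₁.offDiag ∪ T₂.offDiag) with hD
  have h1 : ∑ p ∈ (T₁.offDiag ∪ T₂.offDiag), d p.1 p.2 ^ (-s)
      + ∑ p ∈ (T₁ ∩ T₂).offDiag, d p.1 p.2 ^ (-s)
      = ∑ p ∈ T₁.offDiag, d p.1 p.2 ^ (-s) + ∑ p ∈ T₂.offDiag, d p.1 p.2 ^ (-s) := by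
    rw [← hinter]
    exact Finset.sum_union_inter
  have h2 : ∑ p ∈ D, d p.1 p.2 ^ (-s)
      + ∑ p ∈ (T₁.offDiag ∪ T₂.offDiag), d p.1 p.2 ^ (-s)
      = ∑ p ∈ (T₁ ∪ T₂).offDiag, d p.1 p.2 ^ (-s) :=
    Finset.sum_sdiff hsub
  have hDpos : ∀ p ∈ D, 0 < d p.1 p.2 ^ (-s) := by
    intro p hp
    have hp' := Finset.mem_sdiff.mp hp
    have hne := (Finset.mem_offDiag.mp hp'.1).2.2
    exact Real.rpow_pos_of_pos (hpos _ _ hne) _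
  have key : (∑ p ∈ T₁.offDiag, d p.1 p.2 ^ (-s) + ∑ p ∈ T₂.offDiag, d p.1 p.2 ^ (-s) =
      ∑ p ∈ (T₁ ∪ T₂).offDiag, d p.1 p.2 ^ (-s) + ∑ p ∈ (T₁ ∩ T₂).offDiag, d p.1 p.2 ^ (-s)) ↔ D = ∅ := by
    constructor
    · intro h
      have hsum : ∑ p ∈ D, d p.1 p.2 ^ (-s) = 0 := by linarith
      by_contra hne
      obtain ⟨p, hp⟩ := Finset.nonempty_of_ne_empty hne
      have : 0 < ∑ p ∈ D, d p.1 p.2 ^ (-s) :=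
        Finset.sum_pos hDpos ⟨p, hp⟩
      linarith
    · intro h
      have : ∑ p ∈ D, d p.1 p.2 ^ (-s) = 0 := by rw [h]; simp
      linarith
  rw [key]
  constructor
  · intro h
    by_contra hc
    push_neg at hc
    obtain ⟨hc1, hc2⟩ := hc
    obtain ⟨a, ha1, ha2⟩ := Finset.not_subset.mp hc1
    obtain ⟨b, hb2, hb1⟩ := Finset.not_subset.mp hc2
    have hab : a ≠ b := fun he => ha2 (he ▸ hb2)
    have : (a, b) ∈ D := by
      rw [hD, Finset.mem_sdiff]
      constructor
      · exact Finset.mem_offDiag.mpr ⟨Finset.mem_union_left _ ha1,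
          Finset.mem_union_right _ hb2, hab⟩
      · simp only [Finset.mem_union, Finset.mem_offDiag]
        tauto
    rw [h] at this
    exact absurd this (Finset.notMem_empty _)
  · intro h
    rcases h with h | h
    · have hu : T₁ ∪ T₂ = T₂ := Finset.union_eq_right.mpr h
      rw [hD, Finset.sdiff_eq_empty_iff_subset, hu]
      exact Finset.subset_union_right
    · have hu : T₁ ∪ T₂ = T₁ := Finset.union_eq_left.mpr h
      rw [hD, Finset.sdiff_eq_empty_iff_subset, hu]
      exact Finset.subset_union_left
end

section
/- Let S be a type, let d : S → S → ℝ be nonnegative and symmetric with d(x,x) = 0 for all x, and let s > 0. Then for all finite subsets T₁, T₂ of S, (E_s(T₁ ∪ T₂) + E_s(T₁ ∩ T₂)) − (E_s(T₁) + E_s(T₂)) = 2 · Σ over pairs (a,b) with a ∈ T₁ \ T₂, b ∈ T₂ \ T₁ and d(a,b) ≠ 0 of d(a,b)^{-s}. -/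
open Finset

noncomputable def rieszCrossEnergy {S : Type*} (s : ℝ) (d : S → S → ℝ) (X Y : Finset S) : ℝ :=
  ∑ p ∈ (X ×ˢ Y).filter (fun p => d p.1 p.2 ≠ 0), d p.1 p.2 ^ (-s)

section

variable {S : Type*} (s : ℝ) (d : S → S → ℝ)

theorem rieszEnergy_eq_rieszCrossEnergy_self [DecidableEq S] (hdiag : ∀ x, d x x = 0)
    (X : Finset S) : rieszEnergy s d X = rieszCrossEnergy s d X X := by
  have hfilter : X.offDiag.filter (fun p => d p.1 p.2 ≠ 0)
      = (X ×ˢ X).filter (fun p => d p.1 p.2 ≠ 0) := by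
    ext ⟨x, y⟩
    simp only [mem_filter, mem_offDiag, mem_product]
    refine ⟨fun ⟨⟨hx, hy, _⟩, hd⟩ => ⟨⟨hx, hy⟩, hd⟩, fun ⟨⟨hx, hy⟩, hd⟩ => ⟨⟨hx, hy, ?_⟩, hd⟩⟩
    rintro rfl
    exact hd (hdiag x)
  rw [rieszEnergy, rieszCrossEnergy, hfilter]

theorem rieszCrossEnergy_union_left [DecidableEq S] {X X' : Finset S} (h : Disjoint X X')
    (Y : Finset S) :
    rieszCrossEnergy s d (X ∪ X') Y = rieszCrossEnergy s d X Y + rieszCrossEnergy s d X' Y := by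
  rw [rieszCrossEnergy, union_product, filter_union,
    sum_union (disjoint_filter_filter (disjoint_product.mpr (Or.inl h)))]
  rfl

theorem rieszCrossEnergy_union_right [DecidableEq S] (X : Finset S) {Y Y' : Finset S}
    (h : Disjoint Y Y') :
    rieszCrossEnergy s d X (Y ∪ Y') = rieszCrossEnergy s d X Y + rieszCrossEnergy s d X Y' := by
  rw [rieszCrossEnergy, product_union, filter_union,
    sum_union (disjoint_filter_filter (disjoint_product.mpr (Or.inr h)))]
  rfl

theorem rieszCrossEnergy_comm (hsymm : ∀ x y, d x y = d y x) (X Y : Finset S) :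
    rieszCrossEnergy s d X Y = rieszCrossEnergy s d Y X := by
  refine sum_nbij' Prod.swap Prod.swap ?_ ?_ (fun _ _ => rfl) (fun _ _ => rfl) ?_ <;>
    simp +contextual [hsymm]

theorem rieszEnergy_union_of_disjoint [DecidableEq S] (hdiag : ∀ x, d x x = 0)
    (hsymm : ∀ x y, d x y = d y x) {A B : Finset S} (h : Disjoint A B) :
    rieszEnergy s d (A ∪ B)
      = rieszEnergy s d A + rieszEnergy s d B + 2 * rieszCrossEnergy s d A B := by
  simp only [rieszEnergy_eq_rieszCrossEnergy_self s d hdiag, rieszCrossEnergy_union_left s d h,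
    rieszCrossEnergy_union_right s d _ h, rieszCrossEnergy_comm s d hsymm B A]
  ring

end

theorem rieszEnergy_union_inter_sub_add_eq_cross_general {S : Type*} [DecidableEq S]
    (d : S → S → ℝ) (hsymm : ∀ x y, d x y = d y x)
    (hdiag : ∀ x, d x x = 0) (s : ℝ) (T₁ T₂ : Finset S) :
    (rieszEnergy s d (T₁ ∪ T₂) + rieszEnergy s d (T₁ ∩ T₂)) -
      (rieszEnergy s d T₁ + rieszEnergy s d T₂) =
    2 * ∑ p ∈ ((T₁ \ T₂) ×ˢ (T₂ \ T₁)).filter (fun p => d p.1 p.2 ≠ 0),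
          (d p.1 p.2) ^ (-s) := by
  have hunion : T₁ ∪ T₂ = (T₁ \ T₂ ∪ T₂ \ T₁) ∪ T₁ ∩ T₂ :=
    (symmDiff_sup_inf (a := T₁) (b := T₂)).symm
  have hdisj₁ : Disjoint (T₁ \ T₂) (T₁ ∩ T₂) := disjoint_sdiff_inter T₁ T₂
  have hdisj₂ : Disjoint (T₂ \ T₁) (T₁ ∩ T₂) := by
    simpa only [inter_comm] using disjoint_sdiff_inter T₂ T₁
  have hdisj : Disjoint (T₁ \ T₂ ∪ T₂ \ T₁) (T₁ ∩ T₂) :=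
    disjoint_union_left.mpr ⟨hdisj₁, hdisj₂⟩
  have hE₁ := rieszEnergy_union_of_disjoint s d hdiag hsymm hdisj₁
  have hE₂ := rieszEnergy_union_of_disjoint s d hdiag hsymm hdisj₂
  have hE := rieszEnergy_union_of_disjoint s d hdiag hsymm hdisj
  rw [sdiff_union_inter] at hE₁
  rw [inter_comm, sdiff_union_inter, inter_comm] at hE₂
  rw [← hunion, rieszEnergy_union_of_disjoint s d hdiag hsymm disjoint_sdiff_sdiff,
    rieszCrossEnergy_union_left s d disjoint_sdiff_sdiff] at hE
  change _ = 2 * rieszCrossEnergy s d (T₁ \ T₂) (T₂ \ T₁)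
  linarith

theorem rieszEnergy_union_inter_sub_add_eq_cross {S : Type*} [DecidableEq S]
    (d : S → S → ℝ) (hnonneg : ∀ x y, 0 ≤ d x y) (hsymm : ∀ x y, d x y = d y x)
    (hdiag : ∀ x, d x x = 0) (s : ℝ) (hs : 0 < s) (T₁ T₂ : Finset S) :
    (rieszEnergy s d (T₁ ∪ T₂) + rieszEnergy s d (T₁ ∩ T₂)) -
      (rieszEnergy s d T₁ + rieszEnergy s d T₂) =
    2 * ∑ p ∈ ((T₁ \ T₂) ×ˢ (T₂ \ T₁)).filter (fun p => d p.1 p.2 ≠ 0),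
          (d p.1 p.2) ^ (-s) :=
  rieszEnergy_union_inter_sub_add_eq_cross_general d hsymm hdiag s T₁ T₂
end

section
/- Let S be a type, let d : S → S → ℝ be nonnegative and symmetric with d(x,x) = 0 for all x, and let s > 0. If T₁, T₂ are finite subsets of S and there exist t₁ ∈ T₁ \ T₂ and t₂ ∈ T₂ \ T₁ with d(t₁,t₂) > 0, then E_s(T₁) + E_s(T₂) < E_s(T₁ ∪ T₂) + E_s(T₁ ∩ T₂). -/
lemma rieszEnergy_eq_sum_product {S : Type*} [DecidableEq S]
    (s : ℝ) (d : S → S → ℝ) (X : Finset S) :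
    rieszEnergy s d X = ∑ p ∈ X ×ˢ X,
      (if p.1 ≠ p.2 ∧ d p.1 p.2 ≠ 0 then (d p.1 p.2) ^ (-s) else 0) := by
  rw [Finset.sum_ite, Finset.sum_const_zero, add_zero, rieszEnergy]
  congr 1
  ext p
  simp [Finset.mem_offDiag, Finset.mem_product, and_assoc]

lemma rieszEnergy_eq_sum_big {S : Type*} [DecidableEq S]
    (s : ℝ) (d : S → S → ℝ) (X W : Finset S) (h : X ⊆ W) :
    rieszEnergy s d X = ∑ p ∈ W ×ˢ W,
      (if p ∈ X ×ˢ X then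
        (if p.1 ≠ p.2 ∧ d p.1 p.2 ≠ 0 then (d p.1 p.2) ^ (-s) else 0) else 0) := by
  rw [rieszEnergy_eq_sum_product, Finset.sum_ite_mem,
    Finset.inter_eq_right.mpr (Finset.product_subset_product h h)]

theorem rieszEnergy_strict_supermodular_of_cross_pair {S : Type*} [DecidableEq S]
    (d : S → S → ℝ) (hnonneg : ∀ x y, 0 ≤ d x y) (hsymm : ∀ x y, d x y = d y x)
    (hdiag : ∀ x, d x x = 0) (s : ℝ) (hs : 0 < s) (T₁ T₂ : Finset S)
    (t₁ : S) (ht₁ : t₁ ∈ T₁ \ T₂) (t₂ : S) (ht₂ : t₂ ∈ T₂ \ T₁)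
    (hd : 0 < d t₁ t₂) :
    rieszEnergy s d T₁ + rieszEnergy s d T₂ <
      rieszEnergy s d (T₁ ∪ T₂) + rieszEnergy s d (T₁ ∩ T₂) := by
  set g : S × S → ℝ := fun p =>
    if p.1 ≠ p.2 ∧ d p.1 p.2 ≠ 0 then (d p.1 p.2) ^ (-s) else 0 with hg
  have hgnn : ∀ p, 0 ≤ g p := by
    intro p
    simp only [hg]
    split_ifs
    · exact Real.rpow_nonneg (hnonneg _ _) _
    · exact le_refl 0
  set W := T₁ ∪ T₂ with hW
  rw [rieszEnergy_eq_sum_big s d T₁ W Finset.subset_union_left,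
      rieszEnergy_eq_sum_big s d T₂ W Finset.subset_union_right,
      rieszEnergy_eq_sum_big s d (T₁ ∪ T₂) W le_rfl,
      rieszEnergy_eq_sum_big s d (T₁ ∩ T₂) W
        (Finset.inter_subset_union),
      ← Finset.sum_add_distrib, ← Finset.sum_add_distrib]
  simp only [Finset.mem_sdiff] at ht₁ ht₂
  apply Finset.sum_lt_sum
  · intro p _
    have := hgnn p
    by_cases h1 : p.1 ∈ T₁ <;> by_cases h2 : p.1 ∈ T₂ <;>
      by_cases h3 : p.2 ∈ T₁ <;> by_cases h4 : p.2 ∈ T₂ <;>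
      simp [Finset.mem_product, h1, h2, h3, h4] <;> linarith
  · refine ⟨(t₁, t₂), ?_, ?_⟩
    · simp [Finset.mem_product, hW, Finset.mem_union, ht₁.1, ht₂.1]
    · have hne : t₁ ≠ t₂ := fun h => ht₁.2 (h ▸ ht₂.1)
      have h1 : (t₁, t₂) ∉ T₁ ×ˢ T₁ := by simp [Finset.mem_product, ht₂.2]
      have h2 : (t₁, t₂) ∉ T₂ ×ˢ T₂ := by simp [Finset.mem_product, ht₁.2]
      have h3 : (t₁, t₂) ∈ W ×ˢ W := by
        simp [Finset.mem_product, hW, Finset.mem_union, ht₁.1, ht₂.1]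
      have hgv : g (t₁, t₂) = (d t₁ t₂) ^ (-s) := by simp [hg, hne, ne_of_gt hd]
      have hpos : 0 < (d t₁ t₂) ^ (-s) := Real.rpow_pos_of_pos hd _
      have h5 : (0:ℝ) ≤ if (t₁, t₂) ∈ (T₁ ∩ T₂) ×ˢ (T₁ ∩ T₂) then g (t₁, t₂) else 0 := by
        split_ifs
        · exact hgnn _
        · exact le_rfl
      rw [if_neg h1, if_neg h2, if_pos h3]
      linarith
end

section
/- Let G be a simple graph on a vertex type V with decidable equality and decidable adjacency, and let d : V → V → ℝ be defined by d(i,j) = 0 if i = j, d(i,j) = 2 if i ≠ j and i, j are adjacent, and d(i,j) = 1 otherwise. Let s > 0 and let V' be a finite subset of V with exactly k elements. Then E_s(V') = k(k−1) if and only if V' is an independent set in G (i.e., no two distinct vertices of V' are adjacent). -/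
/-- The distance associated with a simple graph: `0` on the diagonal,
`2` between distinct adjacent vertices, and `1` between distinct
non-adjacent vertices. -/
noncomputable def graphDist {V : Type*} [DecidableEq V] (G : SimpleGraph V)
    [DecidableRel G.Adj] (i j : V) : ℝ :=
  if i = j then 0 else if G.Adj i j then 2 else 1

theorem rieszEnergy_graphDist_eq_upper_iff_independent {V : Type*} [DecidableEq V]
    (G : SimpleGraph V) [DecidableRel G.Adj]
    (s : ℝ) (hs : 0 < s) (V' : Finset V) (k : ℕ) (hk : V'.card = k) :
    rieszEnergy s (graphDist G) V' = k * (k - 1) ↔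
      ∀ x ∈ V', ∀ y ∈ V', x ≠ y → ¬ G.Adj x y := by
  have hfilter : V'.offDiag.filter (fun p => graphDist G p.1 p.2 ≠ 0) = V'.offDiag := by
    apply Finset.filter_true_of_mem
    intro p hp
    have hne : p.1 ≠ p.2 := (Finset.mem_offDiag.mp hp).2.2
    simp only [graphDist, if_neg hne]
    split <;> norm_num
  have hE : rieszEnergy s (graphDist G) V'
      = ∑ p ∈ V'.offDiag, (graphDist G p.1 p.2) ^ (-s) := by
    rw [rieszEnergy, hfilter]
  have hle : ∀ p ∈ V'.offDiag, (graphDist G p.1 p.2) ^ (-s) ≤ 1 := by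
    intro p hp
    have hne : p.1 ≠ p.2 := (Finset.mem_offDiag.mp hp).2.2
    simp only [graphDist, if_neg hne]
    split
    · exact Real.rpow_le_one_of_one_le_of_nonpos (by norm_num) (by linarith)
    · rw [Real.one_rpow]
  have hcard : ((V'.offDiag.card : ℝ)) = (k : ℝ) * ((k : ℝ) - 1) := by
    rw [Finset.offDiag_card, hk]
    have h' : k ≤ k * k := by nlinarith
    push_cast [Nat.cast_sub h']
    ring
  have hsum1 : ∑ _p ∈ V'.offDiag, (1 : ℝ) = (k : ℝ) * ((k : ℝ) - 1) := by
    rw [Finset.sum_const, nsmul_eq_mul, mul_one, hcard]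
  rw [hE, ← hsum1]
  rw [Finset.sum_eq_sum_iff_of_le hle]
  constructor
  · intro h x hx y hy hxy hadj
    have hp : (x, y) ∈ V'.offDiag := Finset.mem_offDiag.mpr ⟨hx, hy, hxy⟩
    have := h _ hp
    simp only [graphDist, if_neg hxy, if_pos hadj] at this
    have hlt : (2 : ℝ) ^ (-s) < 1 :=
      Real.rpow_lt_one_of_one_lt_of_neg (by norm_num) (by linarith)
    linarith
  · intro h p hp
    obtain ⟨hx, hy, hxy⟩ := Finset.mem_offDiag.mp hp
    simp only [graphDist, if_neg hxy, if_neg (h _ hx _ hy hxy), Real.one_rpow]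
end

section
/- Let n be a finite index type and let A be a symmetric real n × n matrix (Aᵀ = A). If w and v are two weightings of A, i.e., A·w = 𝟙 and A·v = 𝟙 where 𝟙 is the all-ones vector, then Σᵢ wᵢ = Σᵢ vᵢ. -/
theorem weighting_sum_invariant {n : Type*} [Fintype n]
    (A : Matrix n n ℝ) (hA : A.transpose = A)
    (w v : n → ℝ)
    (hw : A.mulVec w = fun _ => (1 : ℝ))
    (hv : A.mulVec v = fun _ => (1 : ℝ)) :
    ∑ i, w i = ∑ i, v i := by
  have h1 : dotProduct (A.mulVec v) w = dotProduct v (A.mulVec w) := by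
    rw [Matrix.dotProduct_mulVec, ← Matrix.mulVec_transpose, hA]
  rw [hw, hv] at h1
  simpa [dotProduct] using h1
end

section
/- Let n ∈ ℕ, let A be a real (n+1) × (n+1) matrix indexed by Fin (n+1), and let w : Fin (n+1) → ℝ satisfy A·w = 𝟙 (the all-ones vector). Let B be the (n+2) × (n+2) matrix obtained from A by duplicating the last index: B i j = A (f i) (f j), where f : Fin (n+2) → Fin (n+1) maps each i ≤ n to i and maps n+1 to n. Let α, β ∈ ℝ with α + β = 1, and define w' : Fin (n+2) → ℝ by w' i = w i for i < n, w' n = α · w n, and w' (n+1) = β · w n. Then B·w' = 𝟙 and Σᵢ w'ᵢ = Σᵢ wᵢ. -/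
theorem magnitude_twinning (n : ℕ)
    (A : Matrix (Fin (n + 1)) (Fin (n + 1)) ℝ) (w : Fin (n + 1) → ℝ)
    (hw : A.mulVec w = fun _ => (1 : ℝ))
    (f : Fin (n + 2) → Fin (n + 1))
    (hf : ∀ i : Fin (n + 2), (f i : ℕ) = min (i : ℕ) n)
    (B : Matrix (Fin (n + 2)) (Fin (n + 2)) ℝ)
    (hB : ∀ i j : Fin (n + 2), B i j = A (f i) (f j))
    (α β : ℝ) (hαβ : α + β = 1)
    (w' : Fin (n + 2) → ℝ)
    (hw'lt : ∀ i : Fin (n + 2), (i : ℕ) < n → w' i = w (f i))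
    (hw'n : w' ⟨n, by omega⟩ = α * w ⟨n, by omega⟩)
    (hw'n1 : w' ⟨n + 1, by omega⟩ = β * w ⟨n, by omega⟩) :
    B.mulVec w' = (fun _ => (1 : ℝ)) ∧ ∑ i, w' i = ∑ i, w i := by
  have hf' : ∀ j : Fin n, f (j.castSucc.castSucc) = j.castSucc := by
    intro j; apply Fin.ext; rw [hf]; simp
  have hwlt : ∀ j : Fin n, w' (j.castSucc.castSucc) = w j.castSucc := by
    intro j; rw [hw'lt _ (by simp), hf']
  have hfn : f ((Fin.last n).castSucc) = Fin.last n := by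
    apply Fin.ext; rw [hf]; simp
  have hfn1 : f (Fin.last (n + 1)) = Fin.last n := by
    apply Fin.ext; rw [hf]; simp
  have hw'n2 : w' ((Fin.last n).castSucc) = α * w (Fin.last n) := hw'n
  have hw'last : w' (Fin.last (n + 1)) = β * w (Fin.last n) := hw'n1
  have key : ∀ v : Fin (n + 1) → ℝ,
      ∑ j : Fin (n + 2), v (f j) * w' j = ∑ k, v k * w k := by
    intro v
    rw [Fin.sum_univ_castSucc (n := n + 1), Fin.sum_univ_castSucc (n := n)]
    conv_rhs => rw [Fin.sum_univ_castSucc (n := n)]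
    rw [hfn, hfn1, hw'n2, hw'last]
    have h4 : ∀ j : Fin n, v (f j.castSucc.castSucc) * w' j.castSucc.castSucc
        = v j.castSucc * w j.castSucc := by
      intro j; rw [hf', hwlt]
    rw [Finset.sum_congr rfl (fun j _ => h4 j)]
    linear_combination v (Fin.last n) * w (Fin.last n) * hαβ
  constructor
  · funext i
    have h1 := key (A (f i))
    simp only [Matrix.mulVec, dotProduct, hB]
    rw [h1]
    have h2 := congrFun hw (f i)
    simpa [Matrix.mulVec, dotProduct] using h2
  · have h3 := key (fun _ => 1)
    simpa using h3
end
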